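/- arXiv:2010.06496 — 4 statements merged into one kernel-verified Lean document; each statement's English description precedes it below -/
import Mathlib

section
/- Let σ be a relational vocabulary, 𝒜 and ℬ finite σ-structures, and k ≥ 1. Then the following are equivalent: (1) for every finite σ-structure 𝒞 with td(𝒞) ≤ k, the existence of a homomorphism 𝒞 → 𝒜 implies the existence of a homomorphism 𝒞 → ℬ; (2) there exists a homomorphism E_k 𝒜 → ℬ. -/
/-- A relational vocabulary: a type of relation symbols with arities. -/
structure RelVocab : Type 1 where
  Rel : Type
  ar : Rel → ℕ

/-- A structure for a relational vocabulary. -/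
structure RelStruct (σ : RelVocab) : Type 1 where
  carrier : Type
  rel : ∀ R : σ.Rel, (Fin (σ.ar R) → carrier) → Prop

/-- Homomorphisms of relational structures. -/
def IsHom {σ : RelVocab} (𝒜 ℬ : RelStruct σ) (h : 𝒜.carrier → ℬ.carrier) : Prop :=
  ∀ (R : σ.Rel) (v : Fin (σ.ar R) → 𝒜.carrier), 𝒜.rel R v → ℬ.rel R (fun i => h (v i))

/-- Nonempty sequences over `A` of length at most `k`: the universe of `E_k 𝒜`. -/
def EkC (k : ℕ) (A : Type) : Type :=
  {l : List A // l ≠ [] ∧ l.length ≤ k}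

/-- The counit: the last element of a sequence. -/
def eps {k : ℕ} {A : Type} (s : EkC k A) : A :=
  s.1.getLast s.2.1

/-- Comparability in the prefix order. -/
def Cmp {A : Type} (s t : List A) : Prop :=
  s <+: t ∨ t <+: s

/-- The Ehrenfeucht–Fraïssé comonad `E_k` on structures. -/
def Ek {σ : RelVocab} (k : ℕ) (𝒜 : RelStruct σ) : RelStruct σ where
  carrier := EkC k 𝒜.carrier
  rel R v := (∀ i j, Cmp (v i).1 (v j).1) ∧ 𝒜.rel R (fun i => eps (v i))

/-- The prefix of `s` of length `i+1`. -/
def prefAt {k : ℕ} {A : Type} (s : EkC k A) (i : Fin s.1.length) : EkC k A :=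
  ⟨s.1.take (i + 1), by
    constructor
    · apply List.ne_nil_of_length_pos
      rw [List.length_take]
      exact lt_min (Nat.succ_pos _) (Nat.lt_of_le_of_lt (Nat.zero_le _) i.2)
    · rw [List.length_take]
      exact le_trans (min_le_right _ _) s.2.2⟩

/-- The Kleisli coextension `f* [a_1,…,a_j] = [f[a_1],…,f[a_1,…,a_j]]`. -/
def coext {k : ℕ} {A B : Type} (f : EkC k A → B) (s : EkC k A) : EkC k B :=
  ⟨List.ofFn (fun i : Fin s.1.length => f (prefAt s i)), by
    constructor
    · apply List.ne_nil_of_length_pos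
      rw [List.length_ofFn]
      exact List.length_pos_iff.mpr s.2.1
    · rw [List.length_ofFn]
      exact s.2.2⟩

/-- The adjacency relation of the Gaifman graph of `𝒜`. -/
def gaif {σ : RelVocab} (𝒜 : RelStruct σ) (a a' : 𝒜.carrier) : Prop :=
  a ≠ a' ∧ ∃ (R : σ.Rel) (v : Fin (σ.ar R) → 𝒜.carrier),
    𝒜.rel R v ∧ (∃ i, v i = a) ∧ (∃ j, v j = a')

/-- A forest cover, with universe `V`, of the graph `(V, adj)`, of height at most `k`:
a partial order on `V` whose predecessor sets are finite chains, in which adjacent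
vertices are comparable, and in which every chain has at most `k` elements. -/
structure ForestCoverOn (V : Type) (adj : V → V → Prop) (k : ℕ) where
  le : V → V → Prop
  refl : ∀ a, le a a
  antisymm : ∀ a b, le a b → le b a → a = b
  trans : ∀ a b c, le a b → le b c → le a c
  pred_finite : ∀ a, {b | le b a}.Finite
  pred_chain : ∀ a, IsChain le {b | le b a}
  cover : ∀ a a', adj a a' → le a a' ∨ le a' a
  height : ∀ C : Finset V, IsChain le ↑C → C.card ≤ k

/-!
`E_k 𝒜` is itself a finite structure of tree-depth at most `k`, the prefix order being a
forest cover of its Gaifman graph, and the counit `ε : E_k 𝒜 → 𝒜` is a homomorphism; so (1)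
applied to `E_k 𝒜` gives (2). Conversely, a forest cover of height `≤ k` of `𝒞` sends each
`c` to the chain of its predecessors, a homomorphism `𝒞 → E_k 𝒞` because related elements
lie on a common branch; composing with `E_k g : E_k 𝒞 → E_k 𝒜` and `E_k 𝒜 → ℬ` gives (1).
-/

theorem List.filter_prefix_of_pairwise {α : Type*} {p : α → Bool} {l : List α}
    (h : l.Pairwise fun a b => p b → p a) : l.filter p <+: l := by
  induction l with
  | nil => exact List.prefix_rfl
  | cons a t ih =>
    obtain ⟨ha, ht⟩ := List.pairwise_cons.mp h
    by_cases hpa : p a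
    · simpa [hpa] using ih ht
    · have : t.filter p = [] :=
        List.filter_eq_nil_iff.mpr fun b hb hpb => hpa (ha b hb hpb)
      simp [hpa, this]

theorem IsHom.comp {σ : RelVocab} {𝒜 ℬ 𝒞 : RelStruct σ} {g : ℬ.carrier → 𝒞.carrier}
    {f : 𝒜.carrier → ℬ.carrier} (hg : IsHom ℬ 𝒞 g) (hf : IsHom 𝒜 ℬ f) : IsHom 𝒜 𝒞 (g ∘ f) :=
  fun R v hv => hg R _ (hf R v hv)

namespace EkC

variable {k : ℕ} {A B : Type}

instance [Finite A] : Finite (EkC k A) :=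
  ((List.finite_length_le A k).subset fun _ hl => hl.2).to_subtype

theorem card_le_of_isChain {C : Finset (EkC k A)}
    (hC : IsChain (fun s t : EkC k A => s.1 <+: t.1) (C : Set (EkC k A))) :
    C.card ≤ k := by
  have hinj : Set.InjOn (fun s : EkC k A => s.1.length) ↑C := by
    intro s hs t ht hst
    by_contra hne
    rcases hC hs ht hne with h | h
    · exact hne (Subtype.ext (h.eq_of_length hst))
    · exact hne (Subtype.ext (h.eq_of_length hst.symm).symm)
  have hmaps : Set.MapsTo (fun s : EkC k A => s.1.length) ↑C ↑(Finset.Icc 1 k) := fun s _ => by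
    simpa using ⟨List.length_pos_iff.mpr s.2.1, s.2.2⟩
  simpa using Finset.card_le_card_of_injOn _ hmaps hinj

def map (g : A → B) (s : EkC k A) : EkC k B :=
  ⟨s.1.map g, by simpa using s.2⟩

theorem eps_map (g : A → B) (s : EkC k A) : eps (s.map g) = g (eps s) :=
  List.getLast_map _

end EkC

section Ek

variable {σ : RelVocab} (k : ℕ) (𝒜 : RelStruct σ)

theorem isHom_eps : IsHom (Ek k 𝒜) 𝒜 eps :=
  fun _ _ hv => hv.2

theorem isHom_map {ℬ : RelStruct σ} {g : 𝒜.carrier → ℬ.carrier} (hg : IsHom 𝒜 ℬ g) :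
    IsHom (Ek k 𝒜) (Ek k ℬ) (EkC.map g) := by
  intro R v ⟨hcmp, hv⟩
  refine ⟨fun i j => (hcmp i j).imp (·.map g) (·.map g), ?_⟩
  convert hg R _ hv using 2 with i
  exact EkC.eps_map g (v i)

def prefixForestCover : ForestCoverOn (EkC k 𝒜.carrier) (gaif (Ek k 𝒜)) k where
  le s t := s.1 <+: t.1
  refl _ := List.prefix_refl _
  antisymm _ _ h₁ h₂ := Subtype.ext (h₁.eq_of_length (le_antisymm h₁.length_le h₂.length_le))
  trans _ _ _ h₁ h₂ := h₁.trans h₂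
  pred_finite t := (List.finite_toSet t.1.inits).preimage Subtype.val_injective.injOn
    |>.subset fun _ hs => List.mem_inits _ _ |>.mpr hs
  pred_chain _ _ hs _ ht _ := List.prefix_or_prefix_of_prefix hs ht
  cover := by
    rintro _ _ ⟨-, R, v, hv, ⟨i, rfl⟩, ⟨j, rfl⟩⟩
    exact hv.1 i j
  height _ := EkC.card_le_of_isChain

end Ek

namespace ForestCoverOn

variable {V : Type} {adj : V → V → Prop} {k : ℕ} (F : ForestCoverOn V adj k)

theorem isPartialOrder : IsPartialOrder V F.le where
  refl := F.refl
  trans := F.trans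
  antisymm := F.antisymm

section Branch

variable (s : V → V → Prop) [IsLinearOrder V s] [DecidableRel s]

noncomputable def branch (c : V) : List V :=
  (F.pred_finite c).toFinset.sort s

theorem mem_branch {b c : V} : b ∈ F.branch s c ↔ F.le b c := by
  simp [branch]

theorem branch_ne_nil (c : V) : F.branch s c ≠ [] :=
  List.ne_nil_of_mem ((F.mem_branch s).mpr (F.refl c))

theorem length_branch_le (c : V) : (F.branch s c).length ≤ k := by
  rw [branch, Finset.length_sort]
  exact F.height _ (by simpa using F.pred_chain c)

variable {s}

theorem pairwise_branch (hs : ∀ a b, F.le a b → s a b) (c : V) :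
    (F.branch s c).Pairwise F.le := by
  refine (Finset.pairwise_sort _ s).imp_of_mem fun {a b} ha hb hab => ?_
  rw [mem_branch] at ha hb
  by_cases heq : a = b
  · exact heq ▸ F.refl a
  · exact (F.pred_chain c ha hb heq).resolve_right
      fun hba => heq (_root_.antisymm hab (hs b a hba))

theorem getLast_branch (hs : ∀ a b, F.le a b → s a b) (c : V) :
    (F.branch s c).getLast (F.branch_ne_nil s c) = c := by
  have hc : c ∈ F.branch s c := (F.mem_branch s).mpr (F.refl c)
  refine F.antisymm _ _ ((F.mem_branch s).mp (List.getLast_mem _)) ?_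
  exact (F.pairwise_branch hs c).rel_getLast_of_rel_getLast_getLast hc (F.refl _)

-- The branch of `c` is the filter of the branch of `c'` by `· ≤ c`, which is downward closed.
theorem branch_prefix_branch (hs : ∀ a b, F.le a b → s a b) {c c' : V} (h : F.le c c') :
    F.branch s c <+: F.branch s c' := by
  classical
  have hfilter : (F.branch s c').filter (fun b => F.le b c) = F.branch s c := by
    refine List.Perm.eq_of_pairwise (fun _ _ _ _ => F.antisymm _ _)
      ((F.pairwise_branch hs c').filter _) (F.pairwise_branch hs c) ?_
    have hnodup (c : V) : (F.branch s c).Nodup := Finset.sort_nodup _ s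
    refine (List.perm_ext_iff_of_nodup ((hnodup c').filter _) (hnodup c)).mpr fun b => ?_
    simp only [List.mem_filter, mem_branch, decide_eq_true_eq]
    exact ⟨And.right, fun hb => ⟨F.trans _ _ _ hb h, hb⟩⟩
  rw [← hfilter]
  exact List.filter_prefix_of_pairwise <| (F.pairwise_branch hs c').imp
    fun hab hb => by simpa using F.trans _ _ _ hab (of_decide_eq_true hb)

end Branch

section Coalgebra

variable {σ : RelVocab} {𝒞 : RelStruct σ} {k : ℕ}

-- The `E_k`-coalgebra on `𝒞` determined by the forest cover `F`.
noncomputable def toEk (F : ForestCoverOn 𝒞.carrier (gaif 𝒞) k) (s : 𝒞.carrier → 𝒞.carrier → Prop) [IsLinearOrder 𝒞.carrier s]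
    [DecidableRel s] (c : 𝒞.carrier) : EkC k 𝒞.carrier :=
  ⟨F.branch s c, F.branch_ne_nil s c, F.length_branch_le s c⟩

theorem isHom_toEk (F : ForestCoverOn 𝒞.carrier (gaif 𝒞) k) {s : 𝒞.carrier → 𝒞.carrier → Prop} [IsLinearOrder 𝒞.carrier s]
    [DecidableRel s] (hs : ∀ a b, F.le a b → s a b) : IsHom 𝒞 (Ek k 𝒞) (F.toEk s) := by
  intro R v hv
  refine ⟨fun i j => ?_, ?_⟩
  · by_cases hij : v i = v j
    · simp only [hij]
      exact .inl List.prefix_rfl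
    · exact (F.cover _ _ ⟨hij, R, v, hv, ⟨i, rfl⟩, ⟨j, rfl⟩⟩).imp
        (F.branch_prefix_branch hs) (F.branch_prefix_branch hs)
  · convert hv using 2 with i
    exact F.getLast_branch hs (v i)

theorem exists_isHom_Ek (F : ForestCoverOn 𝒞.carrier (gaif 𝒞) k) :
    ∃ f, IsHom 𝒞 (Ek k 𝒞) f := by
  classical
  have := F.isPartialOrder
  obtain ⟨s, _, hs⟩ := extend_partialOrder F.le
  exact ⟨F.toEk s, F.isHom_toEk hs⟩

end Coalgebra

end ForestCoverOn

theorem stmt16_general (σ : RelVocab) (𝒜 ℬ : RelStruct σ)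
    (hA : Finite 𝒜.carrier) (k : ℕ) :
    (∀ 𝒞 : RelStruct σ, Finite 𝒞.carrier →
      Nonempty (ForestCoverOn 𝒞.carrier (gaif 𝒞) k) →
      (∃ h : 𝒞.carrier → 𝒜.carrier, IsHom 𝒞 𝒜 h) →
      (∃ h : 𝒞.carrier → ℬ.carrier, IsHom 𝒞 ℬ h)) ↔
    (∃ h : EkC k 𝒜.carrier → ℬ.carrier, IsHom (Ek k 𝒜) ℬ h) := by
  constructor
  · intro H
    exact H (Ek k 𝒜) (inferInstanceAs (Finite (EkC k 𝒜.carrier))) ⟨prefixForestCover k 𝒜⟩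
      ⟨eps, isHom_eps k 𝒜⟩
  · rintro ⟨h, hh⟩ 𝒞 - ⟨F⟩ ⟨g, hg⟩
    obtain ⟨f, hf⟩ := F.exists_isHom_Ek
    exact ⟨_, hh.comp ((isHom_map k 𝒞 hg).comp hf)⟩

/-- `𝒜 →_k^E ℬ` iff `E_k 𝒜 → ℬ`: every finite structure of tree-depth at most `k`
(i.e. admitting a forest cover of its Gaifman graph of height at most `k`) mapping into
`𝒜` also maps into `ℬ`, iff there is a homomorphism `E_k 𝒜 → ℬ`. -/
theorem stmt16 (σ : RelVocab) (𝒜 ℬ : RelStruct σ)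
    (hA : Finite 𝒜.carrier) (hB : Finite ℬ.carrier) (k : ℕ) (hk : 1 ≤ k) :
    (∀ 𝒞 : RelStruct σ, Finite 𝒞.carrier →
      Nonempty (ForestCoverOn 𝒞.carrier (gaif 𝒞) k) →
      (∃ h : 𝒞.carrier → 𝒜.carrier, IsHom 𝒞 𝒜 h) →
      (∃ h : 𝒞.carrier → ℬ.carrier, IsHom 𝒞 ℬ h)) ↔
    (∃ h : EkC k 𝒜.carrier → ℬ.carrier, IsHom (Ek k 𝒜) ℬ h) :=
  stmt16_general σ 𝒜 ℬ hA k
end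

section
/- Let σ be a relational vocabulary with symbols of arity at most 2, (𝒜,a) and (ℬ,b) pointed Kripke structures, and k ≥ 0. Then a ∼^g_k b if and only if there exist morphisms of pointed structures f : M_k(𝒜,a) → (ℬ,b) and g : M_k(ℬ,b) → (𝒜,a) which are mutually inverse in the coKleisli category, i.e., g ∘ f* = ε_{(𝒜,a)} and f ∘ g* = ε_{(ℬ,b)}. -/
/-- A modal vocabulary: unary symbols (propositional variables) and binary symbols
(modalities); a relational vocabulary with symbols of arity at most 2. -/
structure ModalVocab : Type 1 where
  Prp : Type
  Act : Type

/-- A Kripke structure for a modal vocabulary. -/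
structure Kripke (V : ModalVocab) : Type 1 where
  carrier : Type
  unary : V.Prp → carrier → Prop
  rel : V.Act → carrier → carrier → Prop

/-- A homomorphism of Kripke structures. -/
def IsKHom {V : ModalVocab} (𝒜 ℬ : Kripke V) (h : 𝒜.carrier → ℬ.carrier) : Prop :=
  (∀ P x, 𝒜.unary P x → ℬ.unary P (h x)) ∧
  (∀ α x y, 𝒜.rel α x y → ℬ.rel α (h x) (h y))

/-- A morphism of pointed Kripke structures. -/
def IsPKHom {V : ModalVocab} (𝒜 : Kripke V) (a : 𝒜.carrier) (ℬ : Kripke V)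
    (b : ℬ.carrier) (h : 𝒜.carrier → ℬ.carrier) : Prop :=
  IsKHom 𝒜 ℬ h ∧ h a = b

/-- `chainFrom 𝒜 x l` : the list `l = [(α₁,a₁),…,(αⱼ,aⱼ)]` is a path of transitions
starting at `x`, i.e. `x →^{α₁} a₁ →^{α₂} ⋯ →^{αⱼ} aⱼ`. -/
def chainFrom {V : ModalVocab} (𝒜 : Kripke V) : 𝒜.carrier → List (V.Act × 𝒜.carrier) → Prop
  | _, [] => True
  | x, (α, y) :: l => 𝒜.rel α x y ∧ chainFrom 𝒜 y l

/-- The last element of a path starting at `x`. -/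
def lastFrom {V : ModalVocab} (𝒜 : Kripke V) : 𝒜.carrier → List (V.Act × 𝒜.carrier) → 𝒜.carrier
  | x, [] => x
  | _, (_, y) :: l => lastFrom 𝒜 y l

theorem chainFrom_take {V : ModalVocab} (𝒜 : Kripke V)
    (l : List (V.Act × 𝒜.carrier)) :
    ∀ (x : 𝒜.carrier) (n : ℕ), chainFrom 𝒜 x l → chainFrom 𝒜 x (l.take n) := by
  induction l with
  | nil => intro x n h; simpa using h
  | cons p l ih =>
    intro x n h
    cases n with
    | zero => simp [chainFrom]
    | succ n =>
      obtain ⟨α, y⟩ := p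
      exact ⟨h.1, ih y n h.2⟩

/-- The universe of `M_k (𝒜, a)`: a sequence `[a, α₁, a₁, …, αⱼ, aⱼ]` with `j ≤ k`
which is a path of transitions from `a`, represented by its list of steps. -/
def MkC {V : ModalVocab} (𝒜 : Kripke V) (a : 𝒜.carrier) (k : ℕ) : Type :=
  {l : List (V.Act × 𝒜.carrier) // l.length ≤ k ∧ chainFrom 𝒜 a l}

/-- The distinguished element `[a]` of `M_k (𝒜, a)`. -/
def mpt {V : ModalVocab} (𝒜 : Kripke V) (a : 𝒜.carrier) (k : ℕ) : MkC 𝒜 a k :=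
  ⟨[], Nat.zero_le k, trivial⟩

/-- The counit: the last element of a sequence. -/
def meps {V : ModalVocab} {𝒜 : Kripke V} {a : 𝒜.carrier} {k : ℕ} (s : MkC 𝒜 a k) :
    𝒜.carrier :=
  lastFrom 𝒜 a s.1

/-- The modal comonad: the Kripke structure `M_k (𝒜, a)`. -/
def MkS {V : ModalVocab} (𝒜 : Kripke V) (a : 𝒜.carrier) (k : ℕ) : Kripke V where
  carrier := MkC 𝒜 a k
  unary P s := 𝒜.unary P (meps s)
  rel α s t := ∃ a', t.1 = s.1 ++ [(α, a')]

/-- The prefix of `s` of length `i+1`. -/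
def mPrefAt {V : ModalVocab} {𝒜 : Kripke V} {a : 𝒜.carrier} {k : ℕ} (s : MkC 𝒜 a k)
    (i : Fin s.1.length) : MkC 𝒜 a k :=
  ⟨s.1.take (i + 1),
    le_trans (by rw [List.length_take]; exact min_le_right _ _) s.2.1,
    chainFrom_take 𝒜 s.1 a (i + 1) s.2.2⟩

/-- `F` is the Kleisli coextension of `f`, i.e. `F` is the map `f*` determined by
`f*[a] = [b]` and `f*(s[α,a']) = f*(s)[α, f(s[α,a'])]`. -/
def IsMCoext {V : ModalVocab} {𝒜 ℬ : Kripke V} {a : 𝒜.carrier} {b : ℬ.carrier} {k : ℕ}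
    (f : MkC 𝒜 a k → ℬ.carrier) (F : MkC 𝒜 a k → MkC ℬ b k) : Prop :=
  ∀ s, (F s).1 = List.ofFn (fun i : Fin s.1.length => ((s.1.get i).1, f (mPrefAt s i)))

/-- The graded bisimulation approximants `a ∼^g_k b`. -/
def gBis {V : ModalVocab} (𝒜 ℬ : Kripke V) : ℕ → 𝒜.carrier → ℬ.carrier → Prop
  | 0, a, b => ∀ P, 𝒜.unary P a ↔ ℬ.unary P b
  | k + 1, a, b =>
    (∀ P, 𝒜.unary P a ↔ ℬ.unary P b) ∧
    (∀ α, ∃ θ : {a' // 𝒜.rel α a a'} ≃ {b' // ℬ.rel α b b'},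
      ∀ a' : {a' // 𝒜.rel α a a'}, gBis 𝒜 ℬ k a'.1 (θ a').1)

/-!
A coKleisli isomorphism between `M_k (𝒜, a)` and `M_k (ℬ, b)` amounts to a bijection between
the two trees of paths that preserves lengths, labels and prefixes, and the unary predicates at
the endpoints. Given `a ∼^g_k b`, choose at every matched pair of states a bijection of
`α`-successors and transport paths along these bijections one step at a time; transporting back
along the inverse bijections undoes it. Conversely, such a tree isomorphism restricts, at every
path `s`, to a bijection between the `α`-children of `s` and those of its image, that is, between
the `α`-successors of their endpoints; induction on the remaining depth gives `∼^g`.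
-/

section Paths

variable {V : ModalVocab} {𝒜 : Kripke V}

theorem chainFrom_append_singleton {x y : 𝒜.carrier} {α : V.Act} (l : List (V.Act × 𝒜.carrier)) :
    chainFrom 𝒜 x (l ++ [(α, y)]) ↔ chainFrom 𝒜 x l ∧ 𝒜.rel α (lastFrom 𝒜 x l) y := by
  induction l generalizing x with
  | nil => simp [chainFrom, lastFrom]
  | cons p l ih => simp [chainFrom, lastFrom, ih, and_assoc]

theorem lastFrom_append_singleton {x y : 𝒜.carrier} {α : V.Act} (l : List (V.Act × 𝒜.carrier)) :
    lastFrom 𝒜 x (l ++ [(α, y)]) = y := by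
  induction l generalizing x with
  | nil => rfl
  | cons p l ih => exact ih

theorem lastFrom_take_succ (x : 𝒜.carrier) {l : List (V.Act × 𝒜.carrier)} {i : ℕ}
    (hi : i < l.length) : lastFrom 𝒜 x (l.take (i + 1)) = l[i].2 := by
  induction l generalizing x i with
  | nil => simp at hi
  | cons p l ih =>
    cases i with
    | zero => cases l <;> rfl
    | succ i => exact ih p.2 (by simpa using hi)

theorem lastFrom_eq_getElem (x : 𝒜.carrier) {l : List (V.Act × 𝒜.carrier)} {i : ℕ}
    (hi : i + 1 = l.length) : lastFrom 𝒜 x l = (l[i]'(by omega)).2 := by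
  rw [← lastFrom_take_succ x, hi, List.take_length]

end Paths

namespace MkC

variable {V : ModalVocab} {𝒜 : Kripke V} {a : 𝒜.carrier} {k : ℕ}

def snoc (s : MkC 𝒜 a k) (hs : s.1.length < k) (α : V.Act) (x : {x // 𝒜.rel α (meps s) x}) :
    MkC 𝒜 a k :=
  ⟨s.1 ++ [(α, x.1)], by simpa using hs, (chainFrom_append_singleton _).2 ⟨s.2.2, x.2⟩⟩

theorem meps_of_val_eq {s t : MkC 𝒜 a k} {α : V.Act} {x : 𝒜.carrier}
    (h : t.1 = s.1 ++ [(α, x)]) : meps t = x := by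
  change lastFrom 𝒜 a t.1 = x
  rw [h, lastFrom_append_singleton]

theorem rel_meps_of_val_eq {s t : MkC 𝒜 a k} {α : V.Act} {x : 𝒜.carrier}
    (h : t.1 = s.1 ++ [(α, x)]) : 𝒜.rel α (meps s) x := by
  have := t.2.2
  rw [h, chainFrom_append_singleton] at this
  exact this.2

theorem eq_mpt {s : MkC 𝒜 a k} (hs : s.1.length = 0) : s = mpt 𝒜 a k :=
  Subtype.ext (List.eq_nil_of_length_eq_zero hs)

def succEquivChildren (s : MkC 𝒜 a k) (hs : s.1.length < k) (α : V.Act) :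
    {x // 𝒜.rel α (meps s) x} ≃ {t // (MkS 𝒜 a k).rel α s t} where
  toFun x := ⟨s.snoc hs α x, x.1, rfl⟩
  invFun t := ⟨meps t.1, by
    obtain ⟨x, hx⟩ := t.2
    rw [meps_of_val_eq hx]
    exact rel_meps_of_val_eq hx⟩
  left_inv x := Subtype.ext (meps_of_val_eq rfl)
  right_inv t := by
    obtain ⟨x, hx⟩ := t.2
    refine Subtype.ext (Subtype.ext ?_)
    change s.1 ++ [(α, meps t.1)] = t.1.1
    rw [meps_of_val_eq hx, hx]

end MkC

namespace IsMCoext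

variable {V : ModalVocab} {𝒜 ℬ : Kripke V} {a : 𝒜.carrier} {b : ℬ.carrier} {k : ℕ}
  {f : MkC 𝒜 a k → ℬ.carrier} {F : MkC 𝒜 a k → MkC ℬ b k}

theorem length (hF : IsMCoext f F) (s : MkC 𝒜 a k) : (F s).1.length = s.1.length := by
  rw [hF s, List.length_ofFn]

theorem getElem (hF : IsMCoext f F) (s : MkC 𝒜 a k) {i : ℕ} (hi : i < s.1.length) :
    (F s).1[i]'(by rwa [hF.length]) = (s.1[i].1, f (mPrefAt s ⟨i, hi⟩)) := by
  simp only [hF s, List.getElem_ofFn, List.get_eq_getElem]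

theorem val_mPrefAt (hF : IsMCoext f F) (s : MkC 𝒜 a k) (i : Fin s.1.length) :
    (F (mPrefAt s i)).1 = (F s).1.take (i + 1) := by
  have hlen : (mPrefAt s i).1.length = min ((i : ℕ) + 1) s.1.length := List.length_take
  refine List.ext_getElem (by rw [hF.length, List.length_take, hF.length, hlen]) fun n h₁ h₂ => ?_
  have hn : n < (mPrefAt s i).1.length := by rwa [← hF.length]
  have hn' : n < s.1.length := by omega
  have hpref : mPrefAt (mPrefAt s i) ⟨n, hn⟩ = mPrefAt s ⟨n, hn'⟩ :=
    Subtype.ext (by simp only [mPrefAt]; rw [List.take_take, min_eq_left (by omega)])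
  rw [List.getElem_take, hF.getElem _ hn, hF.getElem _ hn', hpref]
  simp [mPrefAt]

theorem val_eq_append {s t : MkC 𝒜 a k} {α : V.Act} {x : 𝒜.carrier} (hF : IsMCoext f F)
    (h : t.1 = s.1 ++ [(α, x)]) : (F t).1 = (F s).1 ++ [(α, f t)] := by
  have hlen : t.1.length = s.1.length + 1 := by simp [h]
  refine List.ext_getElem (by simp [hF.length, hlen]) fun n h₁ h₂ => ?_
  have hn : n < t.1.length := by rwa [← hF.length]
  rw [hF.getElem _ hn]
  rcases Nat.lt_or_ge n s.1.length with hs | hs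
  · have hpref : mPrefAt t ⟨n, hn⟩ = mPrefAt s ⟨n, hs⟩ :=
      Subtype.ext (by simp only [mPrefAt, h]; rw [List.take_append_of_le_length (by omega)])
    rw [List.getElem_append_left (by rwa [hF.length]), hF.getElem _ hs, hpref]
    simp [h, List.getElem_append_left hs]
  · have hn' : n = s.1.length := by omega
    subst hn'
    have hpref : mPrefAt t ⟨s.1.length, hn⟩ = t :=
      Subtype.ext (by simp only [mPrefAt]; rw [← hlen, List.take_length])
    rw [List.getElem_append_right (by rw [hF.length]), hpref]
    simp [h, hF.length]

theorem apply_mpt (hF : IsMCoext f F) : F (mpt 𝒜 a k) = mpt ℬ b k :=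
  MkC.eq_mpt (by rw [hF.length]; rfl)

theorem meps_apply (hF : IsMCoext f F) (hpt : f (mpt 𝒜 a k) = b) (s : MkC 𝒜 a k) :
    meps (F s) = f s := by
  rcases h : s.1.length with _ | n
  · rw [MkC.eq_mpt h, hF.apply_mpt, hpt]
    rfl
  · have hn : n < s.1.length := by omega
    have hpref : mPrefAt s ⟨n, hn⟩ = s :=
      Subtype.ext (by change s.1.take (n + 1) = s.1; rw [← h, List.take_length])
    change lastFrom ℬ b (F s).1 = f s
    rw [lastFrom_eq_getElem b (i := n) (by rw [hF.length, h]), hF.getElem _ hn, hpref]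

theorem leftInverse {g : MkC ℬ b k → 𝒜.carrier} {G : MkC ℬ b k → MkC 𝒜 a k}
    (hF : IsMCoext f F) (hG : IsMCoext g G) (hgF : ∀ s, g (F s) = meps s) :
    Function.LeftInverse G F := fun s => by
  refine Subtype.ext (List.ext_getElem (by rw [hG.length, hF.length]) fun n h₁ h₂ => ?_)
  have hn : n < (F s).1.length := by rwa [← hG.length]
  have hn' : n < s.1.length := by rwa [← hF.length]
  have hpref : mPrefAt (F s) ⟨n, hn⟩ = F (mPrefAt s ⟨n, hn'⟩) :=
    Subtype.ext (hF.val_mPrefAt s ⟨n, hn'⟩).symm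
  rw [hG.getElem _ hn, hpref, hgF, hF.getElem _ hn']
  exact Prod.ext rfl (lastFrom_take_succ a hn')

theorem isKHom (hF : IsMCoext f F) (hf : IsPKHom (MkS 𝒜 a k) (mpt 𝒜 a k) ℬ b f) :
    IsKHom (MkS 𝒜 a k) (MkS ℬ b k) F := by
  refine ⟨fun P (s : MkC 𝒜 a k) hs => ?_, fun α s t ⟨x, h⟩ => ⟨f t, hF.val_eq_append h⟩⟩
  change ℬ.unary P (meps (F s))
  rw [hF.meps_apply hf.2]
  exact hf.1.1 P s hs

theorem isPKHom (hF : IsMCoext f F) (hpt : f (mpt 𝒜 a k) = b)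
    (hunary : ∀ P s, 𝒜.unary P (meps s) → ℬ.unary P (f s)) :
    IsPKHom (MkS 𝒜 a k) (mpt 𝒜 a k) ℬ b f := by
  refine ⟨⟨hunary, fun α s t ⟨x, h⟩ => ?_⟩, hpt⟩
  rw [← hF.meps_apply hpt s]
  exact MkC.rel_meps_of_val_eq (hF.val_eq_append h)

end IsMCoext

section Bisimulation

variable {V : ModalVocab} {𝒜 ℬ : Kripke V}

theorem gBis_unary {m : ℕ} {x : 𝒜.carrier} {y : ℬ.carrier} (h : gBis 𝒜 ℬ m x y) (P : V.Prp) :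
    𝒜.unary P x ↔ ℬ.unary P y := by
  cases m with
  | zero => exact h P
  | succ m => exact h.1 P

theorem gBis_meps_of_equiv {a : 𝒜.carrier} {b : ℬ.carrier} {k : ℕ} (e : MkC 𝒜 a k ≃ MkC ℬ b k)
    (he : IsKHom (MkS 𝒜 a k) (MkS ℬ b k) e) (he' : IsKHom (MkS ℬ b k) (MkS 𝒜 a k) e.symm)
    (hlen : ∀ s, (e s).1.length = s.1.length) (m : ℕ) (s : MkC 𝒜 a k)
    (hs : s.1.length + m ≤ k) : gBis 𝒜 ℬ m (meps s) (meps (e s)) := by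
  have unary (s : MkC 𝒜 a k) (P : V.Prp) : 𝒜.unary P (meps s) ↔ ℬ.unary P (meps (e s)) :=
    ⟨he.1 P s, fun h => by simpa [MkS] using he'.1 P (e s) h⟩
  have rel (α : V.Act) (s t : MkC 𝒜 a k) :
      (MkS 𝒜 a k).rel α s t ↔ (MkS ℬ b k).rel α (e s) (e t) :=
    ⟨he.2 α s t, fun h => by simpa using he'.2 α (e s) (e t) h⟩
  induction m generalizing s with
  | zero => exact unary s
  | succ m ih =>
    have hlt : s.1.length < k := by omega
    have hlt' : (e s).1.length < k := by rwa [hlen]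
    refine ⟨unary s, fun α => ⟨(MkC.succEquivChildren s hlt α).trans
      ((e.subtypeEquiv (rel α s)).trans (MkC.succEquivChildren (e s) hlt' α).symm), fun x => ?_⟩⟩
    have := ih (s.snoc hlt α x)
      (by simp only [MkC.snoc, List.length_append, List.length_singleton]; omega)
    rwa [MkC.meps_of_val_eq rfl] at this

end Bisimulation

/-- A graded back-and-forth system: `Z m x y` matches `x` with `y` for `m` more steps. -/
structure ZigZag {V : ModalVocab} {𝒜 ℬ : Kripke V} (Z : ℕ → 𝒜.carrier → ℬ.carrier → Prop) where
  equiv : ∀ {m x y}, Z (m + 1) x y → ∀ α, {x' // 𝒜.rel α x x'} ≃ {y' // ℬ.rel α y y'}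
  related_equiv : ∀ {m x y} (h : Z (m + 1) x y) α x', Z m x'.1 (equiv h α x').1

namespace ZigZag

variable {V : ModalVocab} {𝒜 ℬ : Kripke V} {Z : ℕ → 𝒜.carrier → ℬ.carrier → Prop}
  (E : ZigZag Z)

def symm : ZigZag (fun m y x => Z m x y) where
  equiv h α := (E.equiv h α).symm
  related_equiv h α y := by simpa using E.related_equiv h α ((E.equiv h α).symm y)

open Classical in
noncomputable def step (m : ℕ) (x : 𝒜.carrier) (y : ℬ.carrier) (α : V.Act)
    (x' : 𝒜.carrier) : ℬ.carrier :=
  if h : Z (m + 1) x y ∧ 𝒜.rel α x x' then (E.equiv h.1 α ⟨x', h.2⟩).1 else y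

theorem step_eq {m : ℕ} {x x' : 𝒜.carrier} {y : ℬ.carrier} {α : V.Act}
    (h : Z (m + 1) x y) (hx : 𝒜.rel α x x') : E.step m x y α x' = (E.equiv h α ⟨x', hx⟩).1 :=
  dif_pos ⟨h, hx⟩

theorem symm_step_step {m : ℕ} {x x' : 𝒜.carrier} {y : ℬ.carrier} {α : V.Act}
    (h : Z (m + 1) x y) (hx : 𝒜.rel α x x') : E.symm.step m y x α (E.step m x y α x') = x' := by
  rw [E.step_eq h hx, E.symm.step_eq h (E.equiv h α ⟨x', hx⟩).2]
  simp [symm]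

noncomputable def mapPath :
    ℕ → 𝒜.carrier → ℬ.carrier → List (V.Act × 𝒜.carrier) → List (V.Act × ℬ.carrier)
  | _, _, _, [] => []
  | m, x, y, (α, x') :: l =>
    (α, E.step (m - 1) x y α x') :: mapPath (m - 1) x' (E.step (m - 1) x y α x') l

theorem length_mapPath (m : ℕ) (x : 𝒜.carrier) (y : ℬ.carrier) (l : List (V.Act × 𝒜.carrier)) :
    (E.mapPath m x y l).length = l.length := by
  induction l generalizing m x y with
  | nil => rfl
  | cons p l ih => simp [mapPath, ih]

theorem fst_getElem_mapPath (m : ℕ) (x : 𝒜.carrier) (y : ℬ.carrier)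
    (l : List (V.Act × 𝒜.carrier)) {i : ℕ} (hi : i < l.length) :
    ((E.mapPath m x y l)[i]'(by rwa [length_mapPath])).1 = l[i].1 := by
  induction l generalizing m x y i with
  | nil => simp at hi
  | cons p l ih =>
    cases i with
    | zero => rfl
    | succ i => exact ih _ _ _ (by simpa using hi)

theorem mapPath_take (m : ℕ) (x : 𝒜.carrier) (y : ℬ.carrier) (l : List (V.Act × 𝒜.carrier))
    (n : ℕ) : E.mapPath m x y (l.take n) = (E.mapPath m x y l).take n := by
  induction l generalizing m x y n with
  | nil => simp [mapPath]
  | cons p l ih =>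
    cases n with
    | zero => simp [mapPath]
    | succ n => simp [mapPath, ih]

theorem chainFrom_mapPath {m : ℕ} {x : 𝒜.carrier} {y : ℬ.carrier}
    {l : List (V.Act × 𝒜.carrier)} (h : Z m x y) (hl : chainFrom 𝒜 x l) (hlen : l.length ≤ m) :
    chainFrom ℬ y (E.mapPath m x y l) ∧
      Z (m - l.length) (lastFrom 𝒜 x l) (lastFrom ℬ y (E.mapPath m x y l)) := by
  induction l generalizing m x y with
  | nil => exact ⟨trivial, h⟩
  | cons p l ih =>
    obtain ⟨α, x'⟩ := p
    obtain ⟨n, rfl⟩ : ∃ n, m = n + 1 := ⟨m - 1, by rw [List.length_cons] at hlen; omega⟩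
    have hx : 𝒜.rel α x x' := hl.1
    have hstep := E.step_eq h hx
    obtain ⟨hc, hZ⟩ := ih (E.related_equiv h α ⟨x', hx⟩) hl.2 (by simpa using hlen)
    simp only [mapPath, Nat.add_sub_cancel, List.length_cons, Nat.add_sub_add_right] at hc hZ ⊢
    rw [← hstep] at hc hZ
    exact ⟨⟨hstep ▸ (E.equiv h α ⟨x', hx⟩).2, hc⟩, hZ⟩

theorem symm_mapPath_mapPath {m : ℕ} {x : 𝒜.carrier} {y : ℬ.carrier}
    {l : List (V.Act × 𝒜.carrier)} (h : Z m x y) (hl : chainFrom 𝒜 x l) (hlen : l.length ≤ m) :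
    E.symm.mapPath m y x (E.mapPath m x y l) = l := by
  induction l generalizing m x y with
  | nil => rfl
  | cons p l ih =>
    obtain ⟨α, x'⟩ := p
    obtain ⟨n, rfl⟩ : ∃ n, m = n + 1 := ⟨m - 1, by rw [List.length_cons] at hlen; omega⟩
    have hx : 𝒜.rel α x x' := hl.1
    have hZ : Z n x' (E.step n x y α x') := E.step_eq h hx ▸ E.related_equiv h α ⟨x', hx⟩
    simp only [mapPath, Nat.add_sub_cancel, E.symm_step_step h hx]
    rw [ih hZ hl.2 (by simpa using hlen)]

variable {a : 𝒜.carrier} {b : ℬ.carrier} {k : ℕ}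

noncomputable def onPaths (h : Z k a b) (s : MkC 𝒜 a k) : MkC ℬ b k :=
  ⟨E.mapPath k a b s.1, (E.length_mapPath _ _ _ _).trans_le s.2.1,
    (E.chainFrom_mapPath h s.2.2 s.2.1).1⟩

theorem isMCoext_onPaths (h : Z k a b) :
    IsMCoext (fun s => meps (E.onPaths h s)) (E.onPaths h) := fun s => by
  refine List.ext_getElem (by simp [onPaths, length_mapPath]) fun n h₁ h₂ => ?_
  have hn : n < s.1.length := by simpa using h₂
  change (E.mapPath k a b s.1)[n] = _
  rw [List.getElem_ofFn]
  change _ = (_, lastFrom ℬ b (E.mapPath k a b (s.1.take (n + 1))))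
  rw [mapPath_take, lastFrom_take_succ b (by rwa [length_mapPath])]
  exact Prod.ext (E.fst_getElem_mapPath k a b s.1 hn) rfl

theorem related_meps_onPaths (h : Z k a b) (s : MkC 𝒜 a k) :
    Z (k - s.1.length) (meps s) (meps (E.onPaths h s)) :=
  (E.chainFrom_mapPath h s.2.2 s.2.1).2

noncomputable def pathEquiv (h : Z k a b) : MkC 𝒜 a k ≃ MkC ℬ b k where
  toFun := E.onPaths h
  invFun := E.symm.onPaths h
  left_inv s := Subtype.ext (E.symm_mapPath_mapPath h s.2.2 s.2.1)
  right_inv t := Subtype.ext (E.symm.symm_mapPath_mapPath h t.2.2 t.2.1)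

end ZigZag

section CoKleisliIso

variable {V : ModalVocab} {𝒜 ℬ : Kripke V}

noncomputable def gBisZigZag (𝒜 ℬ : Kripke V) : ZigZag (gBis 𝒜 ℬ) where
  equiv h α := (h.2 α).choose
  related_equiv h α := (h.2 α).choose_spec

theorem exists_coKleisli_iso_of_gBis {a : 𝒜.carrier} {b : ℬ.carrier} {k : ℕ}
    (h : gBis 𝒜 ℬ k a b) :
    ∃ (f : MkC 𝒜 a k → ℬ.carrier) (g : MkC ℬ b k → 𝒜.carrier)
      (F : MkC 𝒜 a k → MkC ℬ b k) (G : MkC ℬ b k → MkC 𝒜 a k),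
      IsPKHom (MkS 𝒜 a k) (mpt 𝒜 a k) ℬ b f ∧ IsPKHom (MkS ℬ b k) (mpt ℬ b k) 𝒜 a g ∧
      IsMCoext f F ∧ IsMCoext g G ∧ (∀ s, g (F s) = meps s) ∧ (∀ t, f (G t) = meps t) := by
  set E := gBisZigZag 𝒜 ℬ
  have hF := E.isMCoext_onPaths h
  have hG := E.symm.isMCoext_onPaths h
  refine ⟨_, _, _, _, hF.isPKHom (congrArg meps hF.apply_mpt) fun P s => ?_,
    hG.isPKHom (congrArg meps hG.apply_mpt) fun P t => ?_, hF, hG,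
    fun s => congrArg meps ((E.pathEquiv h).left_inv s),
    fun t => congrArg meps ((E.pathEquiv h).right_inv t)⟩
  · exact (gBis_unary (E.related_meps_onPaths h s) P).1
  · exact (gBis_unary (E.symm.related_meps_onPaths h t) P).2

theorem gBis_of_coKleisli_iso {a : 𝒜.carrier} {b : ℬ.carrier} {k : ℕ}
    {f : MkC 𝒜 a k → ℬ.carrier} {g : MkC ℬ b k → 𝒜.carrier}
    {F : MkC 𝒜 a k → MkC ℬ b k} {G : MkC ℬ b k → MkC 𝒜 a k}
    (hf : IsPKHom (MkS 𝒜 a k) (mpt 𝒜 a k) ℬ b f) (hg : IsPKHom (MkS ℬ b k) (mpt ℬ b k) 𝒜 a g)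
    (hF : IsMCoext f F) (hG : IsMCoext g G)
    (hgF : ∀ s, g (F s) = meps s) (hfG : ∀ t, f (G t) = meps t) : gBis 𝒜 ℬ k a b := by
  let e : MkC 𝒜 a k ≃ MkC ℬ b k := ⟨F, G, hF.leftInverse hG hgF, hG.leftInverse hF hfG⟩
  have := gBis_meps_of_equiv e (hF.isKHom hf) (hG.isKHom hg) hF.length k (mpt 𝒜 a k)
    (Nat.zero_add k).le
  rwa [show e (mpt 𝒜 a k) = mpt ℬ b k from hF.apply_mpt] at this

end CoKleisliIso

/-- `a ∼^g_k b` iff `(𝒜,a)` and `(ℬ,b)` are isomorphic in the coKleisli category of the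
modal comonad `M_k`. -/
theorem stmt17 (V : ModalVocab) (𝒜 ℬ : Kripke V) (a : 𝒜.carrier) (b : ℬ.carrier)
    (k : ℕ) :
    gBis 𝒜 ℬ k a b ↔
    (∃ (f : MkC 𝒜 a k → ℬ.carrier) (g : MkC ℬ b k → 𝒜.carrier)
      (F : MkC 𝒜 a k → MkC ℬ b k) (G : MkC ℬ b k → MkC 𝒜 a k),
      IsPKHom (MkS 𝒜 a k) (mpt 𝒜 a k) ℬ b f ∧
      IsPKHom (MkS ℬ b k) (mpt ℬ b k) 𝒜 a g ∧
      IsMCoext f F ∧ IsMCoext g G ∧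
      (∀ s, g (F s) = meps s) ∧ (∀ t, f (G t) = meps t)) :=
  ⟨exists_coKleisli_iso_of_gBis, fun ⟨_, _, _, _, hf, hg, hF, hG, hgF, hfG⟩ =>
    gBis_of_coKleisli_iso hf hg hF hG hgF hfG⟩
end

section
/- Let σ be a relational vocabulary, k ≥ 1, and let α : 𝒜 → E_k 𝒜 and β : ℬ → E_k ℬ be E_k-coalgebras on finite σ-structures, with associated forest orders a ≤_α a' iff α(a) is a prefix of α(a') (and similarly ≤_β). Then a σ-homomorphism f : 𝒜 → ℬ is a coalgebra morphism, i.e., β ∘ f = E_k(f) ∘ α where E_k(f)[a_1,…,a_j] = [f(a_1),…,f(a_j)], if and only if f maps ≤_α-minimal elements to ≤_β-minimal elements and preserves the covering relation (a ≺_α a' implies f(a) ≺_β f(a')). -/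
/-- An `E_k`-coalgebra on `𝒜`: a homomorphism `α : 𝒜 → E_k 𝒜` such that, writing
`α(a) = [a_1,…,a_j]`, one has `a_j = a` and `α(a_i) = [a_1,…,a_i]` for `1 ≤ i ≤ j`. -/
structure EkCoalgebra {σ : RelVocab} (𝒜 : RelStruct σ) (k : ℕ) where
  α : 𝒜.carrier → EkC k 𝒜.carrier
  hom : IsHom 𝒜 (Ek k 𝒜) α
  counit : ∀ a, eps (α a) = a
  comult : ∀ (a : 𝒜.carrier) (i : Fin (α a).1.length),
    (α ((α a).1.get i)).1 = (α a).1.take (i + 1)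

/-- The forest order associated to an `E_k`-coalgebra: `a ≤ a'` iff `α(a) ⊑ α(a')`. -/
def cLe {σ : RelVocab} {𝒜 : RelStruct σ} {k : ℕ} (c : EkCoalgebra 𝒜 k)
    (a a' : 𝒜.carrier) : Prop :=
  (c.α a).1 <+: (c.α a').1

/-- The covering relation of the forest order associated to a coalgebra. -/
def cCov {σ : RelVocab} {𝒜 : RelStruct σ} {k : ℕ} (c : EkCoalgebra 𝒜 k)
    (a a' : 𝒜.carrier) : Prop :=
  cLe c a a' ∧ a ≠ a' ∧ ∀ z, cLe c a z → cLe c z a' → z = a ∨ z = a'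

/-! Since `α(a)` is the chain of ancestors of `a` ending in `a`, the element `a` is minimal iff
`α(a) = [a]`, and `a ≺ a'` iff `α(a') = α(a) ++ [a']`. So `β ∘ f = E_k(f) ∘ α` forces `f` to
preserve minimality and covering, and conversely these two properties give `β(f a) = map f (α a)`
by induction on the depth `|α(a)|`. -/

namespace EkCoalgebra

variable {σ : RelVocab} {𝒜 : RelStruct σ} {k : ℕ} (c : EkCoalgebra 𝒜 k)

theorem getLast?_α (a : 𝒜.carrier) : (c.α a).1.getLast? = some a := by
  rw [List.getLast?_eq_some_getLast (c.α a).2.1]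
  exact congrArg some (c.counit a)

theorem length_α_pos (a : 𝒜.carrier) : 0 < (c.α a).1.length :=
  List.length_pos_iff.mpr (c.α a).2.1

theorem eq_of_α_eq {a a' : 𝒜.carrier} (h : (c.α a).1 = (c.α a').1) : a = a' := by
  simpa [h, getLast?_α] using (c.getLast?_α a).symm

theorem eq_of_cLe_of_length_le {a a' : 𝒜.carrier} (h : cLe c a a')
    (hlen : (c.α a').1.length ≤ (c.α a).1.length) : a = a' :=
  c.eq_of_α_eq (h.eq_of_length (le_antisymm h.length_le hlen))

theorem cLe_get (a : 𝒜.carrier) (i : Fin (c.α a).1.length) : cLe c ((c.α a).1.get i) a := by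
  unfold cLe
  rw [c.comult a i]
  exact List.take_prefix _ _

theorem length_α_get (a : 𝒜.carrier) (i : Fin (c.α a).1.length) :
    (c.α ((c.α a).1.get i)).1.length = i + 1 := by
  rw [c.comult a i, List.length_take]
  exact min_eq_left i.2

theorem isMin_iff_length_eq_one (a : 𝒜.carrier) :
    (∀ b, cLe c b a → b = a) ↔ (c.α a).1.length = 1 := by
  constructor
  · intro h
    have hroot := c.length_α_get a ⟨0, c.length_α_pos a⟩
    rwa [h _ (c.cLe_get a _)] at hroot
  · intro h b hb
    exact c.eq_of_cLe_of_length_le hb (h ▸ c.length_α_pos b)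

theorem α_eq_singleton {a : 𝒜.carrier} (h : (c.α a).1.length = 1) : (c.α a).1 = [a] := by
  obtain ⟨x, hx⟩ := List.length_eq_one_iff.mp h
  simpa [hx] using c.getLast?_α a

theorem cCov_iff (a a' : 𝒜.carrier) :
    cCov c a a' ↔ cLe c a a' ∧ (c.α a').1.length = (c.α a).1.length + 1 := by
  constructor
  · rintro ⟨hle, hne, hbetween⟩
    refine ⟨hle, le_antisymm ?_ ?_⟩
    · -- otherwise the ancestor of `a'` at depth `|α a| + 1` lies strictly between `a` and `a'`
      by_contra! hlong
      let z := (c.α a').1.get ⟨(c.α a).1.length, by omega⟩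
      have hz : (c.α z).1.length = (c.α a).1.length + 1 := c.length_α_get a' _
      have haz : cLe c a z :=
        List.prefix_of_prefix_length_le hle (c.cLe_get a' _) (by omega)
      rcases hbetween z haz (c.cLe_get a' _) with h | h <;> rw [h] at hz <;> omega
    · by_contra! hshort
      exact hne (c.eq_of_cLe_of_length_le hle (by omega))
  · rintro ⟨hle, hlen⟩
    refine ⟨hle, fun h => by subst h; omega, fun z h₁ h₂ => ?_⟩
    rcases Nat.eq_or_lt_of_le h₁.length_le with h | h
    · exact Or.inl (c.eq_of_cLe_of_length_le h₁ h.ge).symm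
    · exact Or.inr (c.eq_of_cLe_of_length_le h₂ (by omega))

theorem α_eq_append_of_cCov {a a' : 𝒜.carrier} (h : cCov c a a') :
    (c.α a').1 = (c.α a).1 ++ [a'] := by
  obtain ⟨⟨t, ht⟩, hlen⟩ := (c.cCov_iff a a').mp h
  obtain ⟨x, rfl⟩ : ∃ x, t = [x] := List.length_eq_one_iff.mp (by
    rw [← ht, List.length_append] at hlen
    omega)
  have hx := c.getLast?_α a'
  rw [← ht, List.getLast?_concat, Option.some_inj] at hx
  rw [← ht, hx]

theorem length_eq_one_or_exists_cCov (a : 𝒜.carrier) :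
    (c.α a).1.length = 1 ∨ ∃ a', cCov c a' a := by
  by_cases h : (c.α a).1.length = 1
  · exact Or.inl h
  have hpos := c.length_α_pos a
  let i : Fin (c.α a).1.length := ⟨(c.α a).1.length - 2, by omega⟩
  refine Or.inr ⟨(c.α a).1.get i, (c.cCov_iff _ a).mpr ⟨c.cLe_get a i, ?_⟩⟩
  rw [c.length_α_get a i]
  simp only [i]
  omega

end EkCoalgebra

section Morphism

variable {σ : RelVocab} {𝒜 ℬ : RelStruct σ} {k : ℕ} {cα : EkCoalgebra 𝒜 k}
  {cβ : EkCoalgebra ℬ k} {f : 𝒜.carrier → ℬ.carrier}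

theorem isMin_map_of_α_map (H : ∀ a, (cβ.α (f a)).1 = (cα.α a).1.map f) (a : 𝒜.carrier)
    (ha : ∀ b, cLe cα b a → b = a) : ∀ b, cLe cβ b (f a) → b = f a := by
  rw [cβ.isMin_iff_length_eq_one, H a, List.length_map]
  exact (cα.isMin_iff_length_eq_one a).mp ha

theorem cCov_map_of_α_map (H : ∀ a, (cβ.α (f a)).1 = (cα.α a).1.map f) {a a' : 𝒜.carrier}
    (h : cCov cα a a') : cCov cβ (f a) (f a') := by
  rw [EkCoalgebra.cCov_iff] at h ⊢
  unfold cLe at h ⊢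
  rw [H a, H a', List.length_map, List.length_map]
  exact ⟨h.1.map f, h.2⟩

theorem α_map_of_isMin_map_of_cCov_map
    (hmin : ∀ a, (∀ b, cLe cα b a → b = a) → ∀ b, cLe cβ b (f a) → b = f a)
    (hcov : ∀ a a', cCov cα a a' → cCov cβ (f a) (f a')) (a : 𝒜.carrier) :
    (cβ.α (f a)).1 = (cα.α a).1.map f := by
  induction hn : (cα.α a).1.length using Nat.strong_induction_on generalizing a with
  | _ n ih =>
    rcases cα.length_eq_one_or_exists_cCov a with hroot | ⟨a', ha'⟩
    · have hmin' := hmin a ((cα.isMin_iff_length_eq_one a).mpr hroot)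
      rw [cβ.α_eq_singleton ((cβ.isMin_iff_length_eq_one _).mp hmin'),
        cα.α_eq_singleton hroot, List.map_singleton]
    · have hlen := ((cα.cCov_iff a' a).mp ha').2
      rw [cβ.α_eq_append_of_cCov (hcov _ _ ha'), cα.α_eq_append_of_cCov ha', List.map_append,
        ih _ (by omega) a' rfl, List.map_singleton]

end Morphism

theorem stmt18_general (σ : RelVocab) (𝒜 ℬ : RelStruct σ) (k : ℕ)
    (cα : EkCoalgebra 𝒜 k) (cβ : EkCoalgebra ℬ k)
    (f : 𝒜.carrier → ℬ.carrier) :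
    (∀ a, (cβ.α (f a)).1 = (cα.α a).1.map f) ↔
    ((∀ a, (∀ b, cLe cα b a → b = a) → ∀ b, cLe cβ b (f a) → b = f a) ∧
      (∀ a a', cCov cα a a' → cCov cβ (f a) (f a'))) :=
  ⟨fun H => ⟨isMin_map_of_α_map H, fun _ _ => cCov_map_of_α_map H⟩,
    fun ⟨hmin, hcov⟩ => α_map_of_isMin_map_of_cCov_map hmin hcov⟩

/-- A homomorphism `f : 𝒜 → ℬ` is a coalgebra morphism (`β ∘ f = E_k(f) ∘ α`, where
`E_k(f)` maps sequences elementwise) iff `f` maps minimal elements of the forest order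
associated to `α` to minimal elements of that of `β` and preserves the covering
relation. -/
theorem stmt18 (σ : RelVocab) (𝒜 ℬ : RelStruct σ) (k : ℕ) (hk : 1 ≤ k)
    (hA : Finite 𝒜.carrier) (hB : Finite ℬ.carrier)
    (cα : EkCoalgebra 𝒜 k) (cβ : EkCoalgebra ℬ k)
    (f : 𝒜.carrier → ℬ.carrier) (hf : IsHom 𝒜 ℬ f) :
    (∀ a, (cβ.α (f a)).1 = (cα.α a).1.map f) ↔
    ((∀ a, (∀ b, cLe cα b a → b = a) → ∀ b, cLe cβ b (f a) → b = f a) ∧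
      (∀ a a', cCov cα a a' → cCov cβ (f a) (f a'))) :=
  stmt18_general σ 𝒜 ℬ k cα cβ f
end

section
/- Let σ be a relational vocabulary, 𝒜 a σ-structure, k ≥ 1, and s = [a_1,…,a_i] ∈ A^{≤k} a non-repeating sequence (the a_j are pairwise distinct). Then the map sending each prefix [a_1,…,a_j] of s to its last element a_j is an isomorphism from the substructure of E_k 𝒜 induced on the set of prefixes of s onto the substructure of 𝒜 induced on {a_1,…,a_i}. -/
/-- The substructure of `ℳ` induced on a subset `S` of its universe. -/
def induced {σ : RelVocab} (ℳ : RelStruct σ) (S : Set ℳ.carrier) : RelStruct σ where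
  carrier := {x // x ∈ S}
  rel R v := ℳ.rel R fun i => (v i).1

/-!
Every prefix of `s` is determined by its length, and since the entries of `s` are distinct,
its length is determined by its last entry; so taking last elements is a bijection from the
prefixes of `s` onto the entries of `s`, inverted by cutting `s` after an entry. Relations
transfer in both directions because `E_k` interprets a relation on pairwise comparable
sequences through their last elements, and any two prefixes of `s` are comparable.
-/

theorem List.getLast_take_add_one {A : Type*} {l : List A} {n : ℕ} (hn : n < l.length)
    (h : l.take (n + 1) ≠ []) : (l.take (n + 1)).getLast h = l[n] := by
  simp [List.getLast_take, hn]

theorem List.IsPrefix.take_idxOf_getLast_add_one {A : Type*} [BEq A] [LawfulBEq A]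
    {s t : List A} (hs : s.Nodup) (ht : t <+: s) (hne : t ≠ []) :
    s.take (s.idxOf (t.getLast hne) + 1) = t := by
  have hpos : 0 < t.length := List.length_pos_iff.mpr hne
  have hlt : t.length - 1 < s.length := by have := ht.length_le; omega
  have hlast : t.getLast hne = s[t.length - 1] := by
    rw [List.getLast_eq_getElem]
    exact ht.getElem _
  rw [hlast, hs.idxOf_getElem _ hlt, Nat.sub_add_cancel hpos]
  exact (List.prefix_iff_eq_take.mp ht).symm

theorem cmp_of_isPrefix {A : Type} {s t u : List A} (ht : t <+: s) (hu : u <+: s) : Cmp t u :=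
  List.prefix_or_prefix_of_prefix ht hu

theorem eps_prefAt {k : ℕ} {A : Type} (s : EkC k A) (i : Fin s.1.length) :
    eps (prefAt s i) = s.1[i] :=
  List.getLast_take_add_one i.2 _

section Prefixes

variable {σ : RelVocab} {𝒜 : RelStruct σ} {k : ℕ}

def lastOfPrefix (s : EkC k 𝒜.carrier) :
    (induced (Ek k 𝒜) {t | t.1 <+: s.1}).carrier → (induced 𝒜 {a | a ∈ s.1}).carrier :=
  fun t => ⟨eps t.1, t.2.sublist.mem (List.getLast_mem _)⟩

theorem isHom_lastOfPrefix (s : EkC k 𝒜.carrier) :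
    IsHom (induced (Ek k 𝒜) {t | t.1 <+: s.1}) (induced 𝒜 {a | a ∈ s.1}) (lastOfPrefix s) :=
  fun _ _ h => h.2

def prefixEndingAt [DecidableEq 𝒜.carrier] (s : EkC k 𝒜.carrier) :
    (induced 𝒜 {a | a ∈ s.1}).carrier → (induced (Ek k 𝒜) {t | t.1 <+: s.1}).carrier :=
  fun a => ⟨prefAt s ⟨s.1.idxOf a.1, List.idxOf_lt_length_iff.mpr a.2⟩, List.take_prefix _ _⟩

variable [DecidableEq 𝒜.carrier] (s : EkC k 𝒜.carrier)

theorem lastOfPrefix_prefixEndingAt (a : (induced 𝒜 {a | a ∈ s.1}).carrier) :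
    lastOfPrefix s (prefixEndingAt s a) = a :=
  Subtype.ext ((eps_prefAt s _).trans (List.getElem_idxOf _))

theorem prefixEndingAt_lastOfPrefix (hs : s.1.Nodup)
    (t : (induced (Ek k 𝒜) {t | t.1 <+: s.1}).carrier) :
    prefixEndingAt s (lastOfPrefix s t) = t :=
  Subtype.ext (Subtype.ext (List.IsPrefix.take_idxOf_getLast_add_one hs t.2 t.1.2.1))

theorem isHom_prefixEndingAt :
    IsHom (induced 𝒜 {a | a ∈ s.1}) (induced (Ek k 𝒜) {t | t.1 <+: s.1}) (prefixEndingAt s) := by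
  intro R v h
  refine ⟨fun i j => cmp_of_isPrefix (prefixEndingAt s (v i)).2 (prefixEndingAt s (v j)).2, ?_⟩
  have hlast : (fun i => eps (prefixEndingAt s (v i)).1) = fun i => (v i).1 :=
    funext fun i => congrArg Subtype.val (lastOfPrefix_prefixEndingAt s (v i))
  change 𝒜.rel R fun i => eps (prefixEndingAt s (v i)).1
  rwa [hlast]

end Prefixes

theorem stmt19_general (σ : RelVocab) (𝒜 : RelStruct σ) (k : ℕ)
    (s : EkC k 𝒜.carrier) (hs : s.1.Nodup) :
    ∃ (e : (induced (Ek k 𝒜) {t | t.1 <+: s.1}).carrier →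
        (induced 𝒜 {a | a ∈ s.1}).carrier)
      (e' : (induced 𝒜 {a | a ∈ s.1}).carrier →
        (induced (Ek k 𝒜) {t | t.1 <+: s.1}).carrier),
      (∀ t, (e t).1 = eps t.1) ∧
      Function.LeftInverse e' e ∧ Function.RightInverse e' e ∧
      IsHom (induced (Ek k 𝒜) {t | t.1 <+: s.1}) (induced 𝒜 {a | a ∈ s.1}) e ∧
      IsHom (induced 𝒜 {a | a ∈ s.1}) (induced (Ek k 𝒜) {t | t.1 <+: s.1}) e' := by
  classical
  exact ⟨lastOfPrefix s, prefixEndingAt s, fun _ => rfl, prefixEndingAt_lastOfPrefix s hs,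
    lastOfPrefix_prefixEndingAt s, isHom_lastOfPrefix s, isHom_prefixEndingAt s⟩

/-- For a non-repeating `s ∈ A^{≤k}`, the map sending each prefix of `s` to its last
element is an isomorphism from the substructure of `E_k 𝒜` induced on the prefixes of
`s` onto the substructure of `𝒜` induced on the entries of `s`. -/
theorem stmt19 (σ : RelVocab) (𝒜 : RelStruct σ) (k : ℕ) (hk : 1 ≤ k)
    (s : EkC k 𝒜.carrier) (hs : s.1.Nodup) :
    ∃ (e : (induced (Ek k 𝒜) {t | t.1 <+: s.1}).carrier →
        (induced 𝒜 {a | a ∈ s.1}).carrier)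
      (e' : (induced 𝒜 {a | a ∈ s.1}).carrier →
        (induced (Ek k 𝒜) {t | t.1 <+: s.1}).carrier),
      (∀ t, (e t).1 = eps t.1) ∧
      Function.LeftInverse e' e ∧ Function.RightInverse e' e ∧
      IsHom (induced (Ek k 𝒜) {t | t.1 <+: s.1}) (induced 𝒜 {a | a ∈ s.1}) e ∧
      IsHom (induced 𝒜 {a | a ∈ s.1}) (induced (Ek k 𝒜) {t | t.1 <+: s.1}) e' :=
  stmt19_general σ 𝒜 k s hs
end
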